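/- arXiv:2604.15300 — 2 statements merged into one kernel-verified Lean document; each statement's English description precedes it below -/
import Mathlib

section
/- For every integer j ≥ 1, the iterated improper integral B_j = ∫₀¹ dλ₁ ∫₀^{1−λ₁} dλ₂ ⋯ ∫₀^{1−λ₁−⋯−λ_{j-1}} dλ_j · (1 − ∑_{i=1}^{j} λ_i) · ∏_{k=1}^{j} 1/√(λ_k·(1 − ∑_{i=1}^{k} λ_i)) converges and equals (π/2)^j. -/
/-!
The stick-breaking substitution `λ_k = u_0 ⋯ u_{k-1} (1 - u_k)` maps the open unit cube
bijectively onto the open simplex, with `1 - ∑_{i ≤ k} λ_i = u_0 ⋯ u_k`. Its Jacobian matrix is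
lower triangular with determinant `± ∏_k u_0 ⋯ u_{k-1}`, and these prefix products cancel
against the integrand, which becomes `∏_k √(u_k / (1 - u_k))`. The integral therefore factors
into `n` copies of `∫₀¹ √(x / (1 - x)) dx = π / 2`, computed from the antiderivative
`arcsin √x - √(x (1 - x))`.
-/

open MeasureTheory Real Set

theorem hasDerivAt_arcsin_sqrt_sub_sqrt {x : ℝ} (hx : x ∈ Ioo (0 : ℝ) 1) :
    HasDerivAt (fun x => arcsin √x - √(x * (1 - x))) √(x / (1 - x)) x := by
  obtain ⟨hx0, hx1⟩ := hx
  have h1x : 0 < 1 - x := by linarith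
  have hsx : 0 < √x := sqrt_pos.2 hx0
  have hsqx : √x ^ 2 = x := sq_sqrt hx0.le
  have harcsin := (hasDerivAt_arcsin (by linarith) (by nlinarith)).comp x
    (hasDerivAt_sqrt hx0.ne')
  have hprod := (hasDerivAt_sqrt (mul_pos hx0 h1x).ne').comp x
    ((hasDerivAt_id x).mul ((hasDerivAt_const x (1 : ℝ)).sub (hasDerivAt_id x)))
  refine (harcsin.sub hprod).congr_deriv ?_
  have := sqrt_pos.2 h1x
  simp only [id, Pi.sub_apply, hsqx]
  rw [sqrt_mul hx0.le, sqrt_div hx0.le]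
  field_simp
  nlinarith

theorem integrableOn_sqrt_div_one_sub : IntegrableOn (fun x => √(x / (1 - x))) (Ioc 0 1) :=
  intervalIntegral.integrableOn_deriv_of_nonneg (by fun_prop)
    (fun _ hx => hasDerivAt_arcsin_sqrt_sub_sqrt hx) fun _ _ => sqrt_nonneg _

theorem integral_sqrt_div_one_sub : ∫ x in Ioo (0 : ℝ) 1, √(x / (1 - x)) = π / 2 := by
  rw [← integral_Ioc_eq_integral_Ioo, ← intervalIntegral.integral_of_le zero_le_one,
    intervalIntegral.integral_eq_sub_of_hasDerivAt_of_le zero_le_one (by fun_prop)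
      (fun _ hx => hasDerivAt_arcsin_sqrt_sub_sqrt hx)
      ((intervalIntegrable_iff_integrableOn_Ioc_of_le zero_le_one).2
        integrableOn_sqrt_div_one_sub)]
  simp

theorem Real.div_sqrt_mul {x : ℝ} (hx : 0 ≤ x) (y : ℝ) : x / √(x * y) = √(x / y) := by
  rw [sqrt_mul hx, sqrt_div hx, ← div_div, div_sqrt]

theorem Set.indicator_univ_pi_prod {ι α M₀ : Type*} [Fintype ι] [CommMonoidWithZero M₀]
    (s : Set α) (f : α → M₀) :
    (univ.pi fun _ : ι => s).indicator (fun x => ∏ i, f (x i)) =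
      fun x => ∏ i, s.indicator f (x i) := by
  classical
  ext x
  simp only [indicator_apply, mem_univ_pi, Finset.prod_ite_zero, Finset.mem_univ, true_implies]

section PiProduct

variable {ι E 𝕜 : Type*} [Fintype ι] [MeasureSpace E] [SigmaFinite (volume : Measure E)]
  [RCLike 𝕜] {s : Set E}

theorem integrableOn_univ_pi_prod {f : E → 𝕜} (hs : MeasurableSet s) (hf : IntegrableOn f s) :
    IntegrableOn (fun x : ι → E => ∏ i, f (x i)) (univ.pi fun _ => s) := by
  rw [← integrable_indicator_iff (MeasurableSet.univ_pi fun _ => hs), indicator_univ_pi_prod]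
  exact Integrable.fintype_prod fun _ => (integrable_indicator_iff hs).2 hf

theorem setIntegral_univ_pi_prod (hs : MeasurableSet s) (f : E → 𝕜) :
    ∫ x in univ.pi (fun _ => s), ∏ i : ι, f (x i) = (∫ x in s, f x) ^ Fintype.card ι := by
  rw [← integral_indicator (MeasurableSet.univ_pi fun _ => hs), indicator_univ_pi_prod,
    volume_pi, integral_fintype_prod_eq_pow, integral_indicator hs]

end PiProduct

noncomputable section StickBreaking

variable {n : ℕ}

theorem Fin.univ_filter_val_lt_succ {m : ℕ} (hm : m < n) :
    Finset.univ.filter (fun i : Fin n => (i : ℕ) < m + 1) =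
      insert ⟨m, hm⟩ (Finset.univ.filter (fun i : Fin n => (i : ℕ) < m)) := by
  ext i
  simp only [Finset.mem_filter, Finset.mem_univ, true_and, Finset.mem_insert, Fin.ext_iff]
  omega

theorem Fin.univ_filter_val_lt_self :
    Finset.univ.filter (fun i : Fin n => (i : ℕ) < n) = Finset.univ :=
  Finset.filter_true_of_mem fun i _ => i.isLt

def prefixProd (u : Fin n → ℝ) (m : ℕ) : ℝ :=
  ∏ i ∈ Finset.univ.filter (fun i : Fin n => (i : ℕ) < m), u i

def stickBreaking (u : Fin n → ℝ) (k : Fin n) : ℝ := prefixProd u k * (1 - u k)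

theorem prefixProd_zero (u : Fin n → ℝ) : prefixProd u 0 = 1 := by simp [prefixProd]

theorem prefixProd_succ (u : Fin n → ℝ) {m : ℕ} (hm : m < n) :
    prefixProd u (m + 1) = u ⟨m, hm⟩ * prefixProd u m := by
  rw [prefixProd, Fin.univ_filter_val_lt_succ hm, Finset.prod_insert (by simp), prefixProd]

theorem prefixProd_self (u : Fin n → ℝ) : prefixProd u n = ∏ i, u i := by
  rw [prefixProd, Fin.univ_filter_val_lt_self]

theorem prefixProd_pos {u : Fin n → ℝ} (hu : ∀ i, 0 < u i) (m : ℕ) : 0 < prefixProd u m :=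
  Finset.prod_pos fun i _ => hu i

theorem sum_stickBreaking_filter_val_lt (u : Fin n → ℝ) {m : ℕ} (hm : m ≤ n) :
    ∑ i ∈ Finset.univ.filter (fun i : Fin n => (i : ℕ) < m), stickBreaking u i =
      1 - prefixProd u m := by
  induction m with
  | zero => simp [prefixProd_zero]
  | succ m ih =>
    rw [Fin.univ_filter_val_lt_succ hm, Finset.sum_insert (by simp), ih (by omega),
      prefixProd_succ u hm, stickBreaking]
    ring

theorem one_sub_sum_stickBreaking (u : Fin n → ℝ) : 1 - ∑ i, stickBreaking u i = ∏ i, u i := by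
  have h := sum_stickBreaking_filter_val_lt u le_rfl
  rw [Fin.univ_filter_val_lt_self, prefixProd_self] at h
  linarith

theorem one_sub_sum_stickBreaking_filter_le (u : Fin n → ℝ) (k : Fin n) :
    1 - ∑ i ∈ Finset.univ.filter (fun i : Fin n => i ≤ k), stickBreaking u i =
      prefixProd u ((k : ℕ) + 1) := by
  have hIic : Finset.univ.filter (fun i : Fin n => i ≤ k) =
      Finset.univ.filter (fun i : Fin n => (i : ℕ) < (k : ℕ) + 1) := by
    ext i
    simp only [Finset.mem_filter, Finset.mem_univ, true_and, Fin.le_def]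
    omega
  rw [hIic, sum_stickBreaking_filter_val_lt u k.isLt]
  ring

def unitCube (n : ℕ) : Set (Fin n → ℝ) := univ.pi fun _ => Ioo 0 1

theorem measurableSet_unitCube : MeasurableSet (unitCube n) :=
  MeasurableSet.univ_pi fun _ => measurableSet_Ioo

def openSimplex (n : ℕ) : Set (Fin n → ℝ) := {x | (∀ i, 0 < x i) ∧ ∑ i, x i < 1}

theorem stickBreaking_injOn : InjOn (stickBreaking (n := n)) (unitCube n) := by
  intro u hu v hv huv
  have hprefix : ∀ m ≤ n, prefixProd u m = prefixProd v m := fun m hm => by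
    have hu := sum_stickBreaking_filter_val_lt u hm
    have hv := sum_stickBreaking_filter_val_lt v hm
    rw [huv] at hu
    linarith
  funext k
  have hpos : 0 < prefixProd v k := prefixProd_pos (fun i => (hv i (mem_univ _)).1) k
  have hsucc := hprefix (k + 1) k.isLt
  rw [prefixProd_succ u k.isLt, prefixProd_succ v k.isLt, hprefix k k.isLt.le] at hsucc
  exact mul_right_cancel₀ hpos.ne' hsucc

theorem stickBreaking_mapsTo : MapsTo (stickBreaking (n := n)) (unitCube n) (openSimplex n) := by
  intro u hu
  have hu0 : ∀ i, 0 < u i := fun i => (hu i (mem_univ _)).1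
  refine ⟨fun k => mul_pos (prefixProd_pos hu0 k) (by linarith [(hu k (mem_univ _)).2]), ?_⟩
  linarith [one_sub_sum_stickBreaking u, Finset.prod_pos fun i (_ : i ∈ Finset.univ) => hu0 i]

theorem openSimplex_subset_image_stickBreaking :
    openSimplex n ⊆ stickBreaking '' unitCube n := by
  rintro x ⟨hx0, hx1⟩
  set r : ℕ → ℝ := fun m => 1 - ∑ i ∈ Finset.univ.filter (fun i : Fin n => (i : ℕ) < m), x i
  have hr_pos : ∀ m, 0 < r m := fun m => by
    have := Finset.sum_le_sum_of_subset_of_nonneg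
      (Finset.filter_subset (fun i : Fin n => (i : ℕ) < m) Finset.univ)
      fun i _ _ => (hx0 i).le
    simp only [r]
    linarith
  have hr_succ : ∀ m (hm : m < n), r (m + 1) = r m - x ⟨m, hm⟩ := fun m hm => by
    simp only [r]
    rw [Fin.univ_filter_val_lt_succ hm, Finset.sum_insert (by simp)]
    ring
  set u : Fin n → ℝ := fun k => r (k + 1) / r k
  have hprefix : ∀ m ≤ n, prefixProd u m = r m := fun m hm => by
    induction m with
    | zero => simp [prefixProd_zero, r]
    | succ m ih =>
      rw [prefixProd_succ u hm, ih (by omega)]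
      exact div_mul_cancel₀ _ (hr_pos m).ne'
  refine ⟨u, fun k _ => ⟨div_pos (hr_pos _) (hr_pos _), ?_⟩, funext fun k => ?_⟩
  · rw [div_lt_one (hr_pos _), hr_succ k k.isLt]
    linarith [hx0 k]
  · rw [stickBreaking, hprefix k k.isLt.le, show u k = r (k + 1) / r k from rfl,
      hr_succ k k.isLt]
    field_simp [(hr_pos k).ne']
    ring

theorem stickBreaking_image_unitCube : stickBreaking '' unitCube n = openSimplex n :=
  (stickBreaking_mapsTo.image_subset).antisymm openSimplex_subset_image_stickBreaking

def stickBreakingDeriv (u : Fin n → ℝ) : (Fin n → ℝ) →L[ℝ] (Fin n → ℝ) :=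
  ContinuousLinearMap.pi fun k =>
    prefixProd u k • -ContinuousLinearMap.proj k +
      (1 - u k) • ∑ i ∈ Finset.univ.filter (fun i : Fin n => (i : ℕ) < k),
        (∏ j ∈ (Finset.univ.filter (fun i : Fin n => (i : ℕ) < k)).erase i, u j) •
          ContinuousLinearMap.proj i

theorem hasFDerivAt_stickBreaking (u : Fin n → ℝ) :
    HasFDerivAt stickBreaking (stickBreakingDeriv u) u :=
  hasFDerivAt_pi.2 fun k =>
    hasFDerivAt_finsetProd.mul ((hasFDerivAt_const 1 u).sub (hasFDerivAt_apply k u)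
      |>.congr_fderiv (zero_sub _))

theorem stickBreakingDeriv_apply_single (u : Fin n → ℝ) {k m : Fin n} (hkm : k ≤ m) :
    stickBreakingDeriv u (Pi.single m 1) k =
      -prefixProd u k * Pi.single (M := fun _ => ℝ) m 1 k := by
  simp only [stickBreakingDeriv, ContinuousLinearMap.pi_apply, add_apply, smul_apply, neg_apply,
    ContinuousLinearMap.proj_apply, sum_apply, smul_eq_mul]
  rw [Finset.sum_eq_zero fun i hi => ?_]
  · ring
  · have hik : i < k := by simpa using hi
    rw [Pi.single_eq_of_ne (hik.trans_le hkm).ne, mul_zero]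

theorem det_stickBreakingDeriv (u : Fin n → ℝ) :
    (stickBreakingDeriv u).det = ∏ k : Fin n, -prefixProd u k := by
  rw [ContinuousLinearMap.det, ← LinearMap.det_toMatrix', Matrix.det_of_isLowerTriangular]
  · refine Finset.prod_congr rfl fun k _ => ?_
    rw [LinearMap.toMatrix'_apply, ContinuousLinearMap.coe_coe,
      stickBreakingDeriv_apply_single u le_rfl, Pi.single_eq_same, mul_one]
  · intro k m (hkm : k < m)
    rw [LinearMap.toMatrix'_apply, ContinuousLinearMap.coe_coe,
      stickBreakingDeriv_apply_single u hkm.le, Pi.single_eq_of_ne hkm.ne, mul_zero]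

def weightedDensity (x : Fin n → ℝ) : ℝ :=
  (1 - ∑ i, x i) *
    ∏ k, 1 / √(x k * (1 - ∑ i ∈ Finset.univ.filter (fun i : Fin n => i ≤ k), x i))

theorem abs_det_stickBreakingDeriv {u : Fin n → ℝ} (hu : ∀ i, 0 < u i) :
    |(stickBreakingDeriv u).det| = ∏ k : Fin n, prefixProd u k := by
  rw [det_stickBreakingDeriv, Finset.abs_prod]
  exact Finset.prod_congr rfl fun k _ => by rw [abs_neg, abs_of_pos (prefixProd_pos hu _)]

theorem sqrt_stickBreaking_mul_one_sub_sum {u : Fin n → ℝ} (hu : ∀ i, 0 < u i) (k : Fin n) :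
    √(stickBreaking u k *
        (1 - ∑ i ∈ Finset.univ.filter (fun i : Fin n => i ≤ k), stickBreaking u i)) =
      prefixProd u k * √(u k * (1 - u k)) := by
  rw [one_sub_sum_stickBreaking_filter_le, prefixProd_succ u k.isLt, stickBreaking,
    show prefixProd u k * (1 - u k) * (u k * prefixProd u k) =
      prefixProd u k ^ 2 * (u k * (1 - u k)) by ring,
    sqrt_mul (sq_nonneg _), sqrt_sq (prefixProd_pos hu _).le]

theorem abs_det_mul_weightedDensity_stickBreaking {u : Fin n → ℝ} (hu : u ∈ unitCube n) :
    |(stickBreakingDeriv u).det| * weightedDensity (stickBreaking u) =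
      ∏ k, √(u k / (1 - u k)) := by
  have hu0 : ∀ i, 0 < u i := fun i => (hu i (mem_univ _)).1
  rw [weightedDensity, abs_det_stickBreakingDeriv hu0, one_sub_sum_stickBreaking,
    ← mul_assoc, ← Finset.prod_mul_distrib, ← Finset.prod_mul_distrib]
  refine Finset.prod_congr rfl fun k _ => ?_
  have hP := prefixProd_pos hu0 k
  rw [sqrt_stickBreaking_mul_one_sub_sum hu0, ← Real.div_sqrt_mul (hu0 k).le]
  field_simp

theorem integrableOn_openSimplex_iff {E : Type*} [NormedAddCommGroup E] [NormedSpace ℝ E]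
    {g : (Fin n → ℝ) → E} :
    IntegrableOn g (openSimplex n) ↔
      IntegrableOn (fun u => |(stickBreakingDeriv u).det| • g (stickBreaking u)) (unitCube n) := by
  rw [← stickBreaking_image_unitCube]
  exact integrableOn_image_iff_integrableOn_abs_det_fderiv_smul volume measurableSet_unitCube
    (fun u _ => (hasFDerivAt_stickBreaking u).hasFDerivWithinAt) stickBreaking_injOn g

theorem setIntegral_openSimplex {E : Type*} [NormedAddCommGroup E] [NormedSpace ℝ E]
    (g : (Fin n → ℝ) → E) :
    ∫ x in openSimplex n, g x =
      ∫ u in unitCube n, |(stickBreakingDeriv u).det| • g (stickBreaking u) := by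
  rw [← stickBreaking_image_unitCube]
  exact integral_image_eq_integral_abs_det_fderiv_smul volume measurableSet_unitCube
    (fun u _ => (hasFDerivAt_stickBreaking u).hasFDerivWithinAt) stickBreaking_injOn g

end StickBreaking

theorem stmt_10_general (j : ℕ) :
    IntegrableOn
      (fun lam : Fin j → ℝ =>
        (1 - ∑ i, lam i) *
          ∏ k, 1 / Real.sqrt (lam k *
            (1 - ∑ i ∈ Finset.univ.filter (fun i : Fin j => i ≤ k), lam i)))
      {lam : Fin j → ℝ | (∀ i, 0 < lam i) ∧ ∑ i, lam i < 1} volume ∧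
    (∫ lam in {lam : Fin j → ℝ | (∀ i, 0 < lam i) ∧ ∑ i, lam i < 1},
        (1 - ∑ i, lam i) *
          ∏ k, 1 / Real.sqrt (lam k *
            (1 - ∑ i ∈ Finset.univ.filter (fun i : Fin j => i ≤ k), lam i)))
      = (Real.pi / 2) ^ j := by
  change IntegrableOn weightedDensity (openSimplex j) ∧
    ∫ x in openSimplex j, weightedDensity x = (π / 2) ^ j
  have hsubst : EqOn (fun u => |(stickBreakingDeriv u).det| • weightedDensity (stickBreaking u))
      (fun u => ∏ k, √(u k / (1 - u k))) (unitCube j) :=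
    fun u hu => abs_det_mul_weightedDensity_stickBreaking hu
  have hfactor : IntegrableOn (fun u => ∏ k, √(u k / (1 - u k))) (unitCube j) :=
    integrableOn_univ_pi_prod measurableSet_Ioo
      (integrableOn_sqrt_div_one_sub.mono_set Ioo_subset_Ioc_self)
  rw [integrableOn_openSimplex_iff, setIntegral_openSimplex,
    setIntegral_congr_fun measurableSet_unitCube hsubst]
  refine ⟨hfactor.congr_fun hsubst.symm measurableSet_unitCube, ?_⟩
  rw [unitCube, setIntegral_univ_pi_prod measurableSet_Ioo fun x => √(x / (1 - x)),
    integral_sqrt_div_one_sub, Fintype.card_fin]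

/-- For every `j ≥ 1`, the (iterated) improper integral
`B_j = ∫_{λ_i > 0, ∑ λ_i < 1} (1 − ∑ λ_i) ∏_{k} 1/√(λ_k (1 − ∑_{i≤k} λ_i)) dλ`
converges and equals `(π/2)^j`. -/
theorem stmt_10 (j : ℕ) (hj : 1 ≤ j) :
    IntegrableOn
      (fun lam : Fin j → ℝ =>
        (1 - ∑ i, lam i) *
          ∏ k, 1 / Real.sqrt (lam k *
            (1 - ∑ i ∈ Finset.univ.filter (fun i : Fin j => i ≤ k), lam i)))
      {lam : Fin j → ℝ | (∀ i, 0 < lam i) ∧ ∑ i, lam i < 1} volume ∧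
    (∫ lam in {lam : Fin j → ℝ | (∀ i, 0 < lam i) ∧ ∑ i, lam i < 1},
        (1 - ∑ i, lam i) *
          ∏ k, 1 / Real.sqrt (lam k *
            (1 - ∑ i ∈ Finset.univ.filter (fun i : Fin j => i ≤ k), lam i)))
      = (Real.pi / 2) ^ j :=
  stmt_10_general j
end

section
/- Let n ≥ 2, let Φ₁, …, Φ_{n-1} be independent random variables uniformly distributed on [0, π/2], and for 1 ≤ j ≤ n−1 define Λ_j = cos²(Φ_j)·∏_{i=1}^{j-1} sin²(Φ_i) and F_j = E[Λ_j · ln Λ_j]. Let a = ln 2 − 1/2. Then for every j with 1 ≤ j+1 ≤ n−1, the recursion F_{j+1} = F_j/2 − a/2^j holds. -/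
open MeasureTheory Real

/-- The uniform probability measure on the interval `[0, π/2]`. -/
noncomputable def uniformHalfPi : Measure ℝ :=
  ENNReal.ofReal (2 / Real.pi) • volume.restrict (Set.Icc 0 (Real.pi / 2))

/-- The eigenvalue `Λ` with 0-based index `j`:
`Λ_j(φ) = cos²(φ j) ∏_{i<j} sin²(φ i)`. -/
noncomputable def Lam (m : ℕ) (j : Fin m) (φ : Fin m → ℝ) : ℝ :=
  Real.cos (φ j) ^ 2 * ∏ i ∈ Finset.univ.filter (fun i : Fin m => i < j), Real.sin (φ i) ^ 2

/-- The expectation `F_j = E[Λ_j ln Λ_j]` (0-based index `j`) with respect to the product of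
uniform measures on `[0, π/2]`, modelling independent uniform spherical coordinates. -/
noncomputable def Fexp (m : ℕ) (j : Fin m) : ℝ :=
  ∫ φ : Fin m → ℝ, Lam m j φ * Real.log (Lam m j φ)
    ∂(Measure.pi fun _ : Fin m => uniformHalfPi)


/-!
`Λ_j` is a product of independent factors `p_i = p_i(φ_i)`, so expanding
`log ∏ p_i = ∑ log p_i` gives `E[Λ_j log Λ_j] = ∑_k E[p_k log p_k] ∏_{i ≠ k} E[p_i]`.
The `j` nontrivial factors (`sin²`, and one `cos²`) all have mean `1/2` and
`E[p log p] = 1/2 - ln 2`, the latter from `∫₀^{π/2} log sin = -(π/2) ln 2` and an integration by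
parts.  Hence `F_j = j (1/2 - ln 2) / 2^{j-1}`, and the recursion is an identity between these
closed forms.
-/

open Finset

section ProdMulLog

variable {ι : Type*} [DecidableEq ι]

theorem prod_mul_log_prod (s : Finset ι) (f : ι → ℝ) :
    (∏ i ∈ s, f i) * log (∏ i ∈ s, f i) = ∑ k ∈ s, f k * log (f k) * ∏ i ∈ s.erase k, f i := by
  by_cases hzero : ∃ i ∈ s, f i = 0
  · obtain ⟨i₀, hi₀, hfi₀⟩ := hzero
    rw [prod_eq_zero hi₀ hfi₀, zero_mul, eq_comm]
    refine sum_eq_zero fun k hk => ?_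
    rcases eq_or_ne k i₀ with rfl | hne
    · simp [hfi₀]
    · rw [prod_eq_zero (mem_erase.2 ⟨hne.symm, hi₀⟩) hfi₀, mul_zero]
  · push Not at hzero
    rw [log_prod hzero, mul_sum]
    refine sum_congr rfl fun k hk => ?_
    rw [← mul_prod_erase s f hk]
    ring

theorem abs_mul_log_le_one {t : ℝ} (h0 : 0 ≤ t) (h1 : t ≤ 1) : |t * log t| ≤ 1 := by
  have hnonneg := negMulLog_nonneg h0 h1
  have hle := negMulLog_le_one_sub_self h0
  rw [negMulLog] at hnonneg hle
  rw [abs_le]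
  constructor <;> linarith

variable [Fintype ι] {Ω : ι → Type*} [∀ i, MeasurableSpace (Ω i)]

theorem integral_prod_mul_log_prod (μ : ∀ i, Measure (Ω i)) [∀ i, IsFiniteMeasure (μ i)]
    {f : ∀ i, Ω i → ℝ} (hf : ∀ i, Measurable (f i)) (hf01 : ∀ i y, f i y ∈ Set.Icc 0 1) :
    ∫ x, (∏ i, f i (x i)) * log (∏ i, f i (x i)) ∂Measure.pi μ =
      ∑ k, (∫ y, f k y * log (f k y) ∂μ k) * ∏ i ∈ univ.erase k, ∫ y, f i y ∂μ i := by
  set g : ι → ∀ i, Ω i → ℝ := fun k => Function.update f k fun y => f k y * log (f k y)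
  have hg_bound : ∀ k i y, |g k i y| ≤ 1 := by
    intro k i y
    obtain ⟨h0, h1⟩ := hf01 i y
    rcases eq_or_ne i k with rfl | hne
    · simpa only [g, Function.update_self] using abs_mul_log_le_one h0 h1
    · simpa only [g, Function.update_of_ne hne, abs_of_nonneg h0] using h1
  have hg_meas : ∀ k i, Measurable (g k i) := by
    intro k i
    rcases eq_or_ne i k with rfl | hne
    · simp only [g, Function.update_self]
      exact (hf i).mul (hf i).log
    · simpa only [g, Function.update_of_ne hne] using hf i
  have hg_int : ∀ k, Integrable (fun x : ∀ i, Ω i => ∏ i, g k i (x i)) (Measure.pi μ) := by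
    intro k
    have hmeas : Measurable fun x : ∀ i, Ω i => ∏ i, g k i (x i) :=
      measurable_prod _ fun i _ => (hg_meas k i).comp (measurable_pi_apply i)
    refine Integrable.of_bound (C := 1) hmeas.aestronglyMeasurable
      (Filter.Eventually.of_forall fun x => ?_)
    rw [Real.norm_eq_abs, abs_prod]
    exact prod_le_one (fun i _ => abs_nonneg _) fun i _ => hg_bound k i (x i)
  have hprod_g : ∀ k (x : ∀ i, Ω i),
      ∏ i, g k i (x i) = f k (x k) * log (f k (x k)) * ∏ i ∈ univ.erase k, f i (x i) := by
    intro k x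
    simp only [g, Function.apply_update (fun i (h : Ω i → ℝ) => h (x i))]
    rw [prod_update_of_mem (mem_univ k), sdiff_singleton_eq_erase]
  calc ∫ x, (∏ i, f i (x i)) * log (∏ i, f i (x i)) ∂Measure.pi μ
      = ∫ x, ∑ k, ∏ i, g k i (x i) ∂Measure.pi μ := by
        simp only [hprod_g, prod_mul_log_prod]
    _ = ∑ k, ∏ i, ∫ y, g k i y ∂μ i := by
        rw [integral_finsetSum _ fun k _ => hg_int k]
        simp only [integral_fintype_prod_eq_prod]
    _ = _ := by
        refine sum_congr rfl fun k _ => ?_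
        simp only [g, Function.apply_update (fun i (h : Ω i → ℝ) => ∫ y, h y ∂μ i)]
        rw [prod_update_of_mem (mem_univ k), sdiff_singleton_eq_erase]

end ProdMulLog

section TrigLogIntegrals

open intervalIntegral

theorem integral_cos_two_mul_mul_log_sin :
    ∫ x in (0 : ℝ)..π / 2, cos (2 * x) * log (sin x) = -(π / 4) := by
  -- an antiderivative, obtained by integrating by parts against `sin (2 x) / 2 = sin x cos x`
  set G : ℝ → ℝ := fun x => cos x * (sin x * log (sin x)) - (x + sin x * cos x) / 2
  have hG_cont : Continuous G := by
    have hmul_log_sin := continuous_mul_log.comp continuous_sin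
    fun_prop
  have hG_deriv : ∀ x ∈ Set.Ioo 0 (π / 2), HasDerivAt G (cos (2 * x) * log (sin x)) x := by
    intro x hx
    have hsin : sin x ≠ 0 := (sin_pos_of_pos_of_lt_pi hx.1 (by linarith [pi_pos, hx.2])).ne'
    have h := ((hasDerivAt_cos x).mul ((hasDerivAt_mul_log hsin).comp x (hasDerivAt_sin x))).sub
      (((hasDerivAt_id x).add ((hasDerivAt_sin x).mul (hasDerivAt_cos x))).div_const 2)
    refine h.congr_deriv ?_
    simp only [Function.comp_apply, cos_two_mul]
    linear_combination (1 / 2 - log (sin x)) * sin_sq_add_cos_sq x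
  have hint : IntervalIntegrable (fun x => cos (2 * x) * log (sin x)) volume 0 (π / 2) :=
    intervalIntegrable_log_sin.continuousOn_mul (f := fun x => log (sin x)) (by fun_prop)
  rw [integral_eq_sub_of_hasDerivAt_of_le (by positivity) hG_cont.continuousOn hG_deriv hint]
  simp only [G, cos_pi_div_two, sin_pi_div_two, log_one, cos_zero, sin_zero, log_zero, mul_zero,
    mul_one, add_zero, zero_div, sub_zero]
  ring

theorem integral_sin_sq_mul_log_sin_sq :
    ∫ x in (0 : ℝ)..π / 2, sin x ^ 2 * log (sin x ^ 2) = π / 4 - π / 2 * log 2 := by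
  have hpoint : ∀ x, sin x ^ 2 * log (sin x ^ 2) = log (sin x) - cos (2 * x) * log (sin x) := by
    intro x
    rw [log_pow, cos_two_mul, cos_sq']
    push_cast
    ring
  simp only [hpoint]
  have hlog_sin : IntervalIntegrable (fun x => log (sin x)) volume 0 (π / 2) :=
    intervalIntegrable_log_sin
  rw [integral_sub hlog_sin (hlog_sin.continuousOn_mul (by fun_prop)),
    integral_log_sin_zero_pi_div_two, integral_cos_two_mul_mul_log_sin]
  ring

theorem integral_cos_sq_mul_log_cos_sq :
    ∫ x in (0 : ℝ)..π / 2, cos x ^ 2 * log (cos x ^ 2) = π / 4 - π / 2 * log 2 := by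
  have h := integral_comp_sub_left (a := 0) (b := π / 2)
    (fun x => sin x ^ 2 * log (sin x ^ 2)) (π / 2)
  simp only [sin_pi_div_two_sub, sub_self, sub_zero] at h
  rw [h, integral_sin_sq_mul_log_sin_sq]

end TrigLogIntegrals

instance : IsProbabilityMeasure uniformHalfPi := by
  constructor
  rw [uniformHalfPi, Measure.smul_apply, Measure.restrict_apply MeasurableSet.univ,
    Set.univ_inter, volume_Icc, smul_eq_mul, ← ENNReal.ofReal_mul (by positivity)]
  field_simp
  simp

theorem integral_uniformHalfPi (f : ℝ → ℝ) :
    ∫ x, f x ∂uniformHalfPi = 2 / π * ∫ x in (0 : ℝ)..π / 2, f x := by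
  rw [uniformHalfPi, integral_smul_measure, integral_Icc_eq_integral_Ioc,
    intervalIntegral.integral_of_le (by positivity), ENNReal.toReal_ofReal (by positivity),
    smul_eq_mul]

theorem integral_sin_sq_uniformHalfPi : ∫ x, sin x ^ 2 ∂uniformHalfPi = 1 / 2 := by
  rw [integral_uniformHalfPi, integral_sin_sq]
  field_simp
  simp

theorem integral_cos_sq_uniformHalfPi : ∫ x, cos x ^ 2 ∂uniformHalfPi = 1 / 2 := by
  rw [integral_uniformHalfPi, integral_cos_sq]
  field_simp
  simp

theorem integral_sin_sq_mul_log_sin_sq_uniformHalfPi :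
    ∫ x, sin x ^ 2 * log (sin x ^ 2) ∂uniformHalfPi = 1 / 2 - log 2 := by
  rw [integral_uniformHalfPi, integral_sin_sq_mul_log_sin_sq]
  field_simp
  ring

theorem integral_cos_sq_mul_log_cos_sq_uniformHalfPi :
    ∫ x, cos x ^ 2 * log (cos x ^ 2) ∂uniformHalfPi = 1 / 2 - log 2 := by
  rw [integral_uniformHalfPi, integral_cos_sq_mul_log_cos_sq]
  field_simp
  ring

section LamFactor

variable {m : ℕ}

noncomputable def lamFactor (j i : Fin m) (x : ℝ) : ℝ :=
  if i < j then sin x ^ 2 else if i = j then cos x ^ 2 else 1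

theorem Lam_eq_prod_lamFactor (j : Fin m) (φ : Fin m → ℝ) :
    Lam m j φ = ∏ i, lamFactor j i (φ i) := by
  unfold Lam lamFactor
  rw [prod_ite, prod_ite_eq' _ j]
  simp [mul_comm]

theorem measurable_lamFactor (j i : Fin m) : Measurable (lamFactor j i) := by
  unfold lamFactor
  split_ifs <;> fun_prop

theorem lamFactor_mem_Icc (j i : Fin m) (x : ℝ) : lamFactor j i x ∈ Set.Icc 0 1 := by
  unfold lamFactor
  split_ifs
  · exact ⟨sq_nonneg _, sin_sq_le_one x⟩
  · exact ⟨sq_nonneg _, cos_sq_le_one x⟩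
  · exact ⟨zero_le_one, le_rfl⟩

theorem integral_lamFactor (j i : Fin m) :
    ∫ x, lamFactor j i x ∂uniformHalfPi = if i ≤ j then 1 / 2 else 1 := by
  rcases lt_trichotomy i j with h | rfl | h
  · simp [lamFactor, h, h.le, integral_sin_sq_uniformHalfPi]
  · simp [lamFactor, integral_cos_sq_uniformHalfPi]
  · simp [lamFactor, not_lt.2 h.le, h.ne', not_le.2 h]

theorem integral_lamFactor_mul_log (j i : Fin m) :
    ∫ x, lamFactor j i x * log (lamFactor j i x) ∂uniformHalfPi =
      if i ≤ j then 1 / 2 - log 2 else 0 := by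
  rcases lt_trichotomy i j with h | rfl | h
  · simp only [lamFactor, if_pos h, if_pos h.le]
    exact integral_sin_sq_mul_log_sin_sq_uniformHalfPi
  · simp only [lamFactor, lt_irrefl, if_false, if_true, le_refl]
    exact integral_cos_sq_mul_log_cos_sq_uniformHalfPi
  · simp [lamFactor, not_lt.2 h.le, h.ne', not_le.2 h]

theorem prod_erase_ite_le (j k : Fin m) (hk : k ≤ j) :
    ∏ i ∈ univ.erase k, (if i ≤ j then (1 / 2 : ℝ) else 1) = (1 / 2) ^ (j : ℕ) := by
  rw [prod_ite, prod_const_one, mul_one, prod_const, filter_erase, filter_ge_eq_Iic,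
    card_erase_of_mem (mem_Iic.2 hk), Fin.card_Iic, Nat.add_sub_cancel]

theorem Fexp_eq (j : Fin m) : Fexp m j = ((j : ℕ) + 1) * (1 / 2 - log 2) / 2 ^ (j : ℕ) := by
  simp only [Fexp, Lam_eq_prod_lamFactor]
  rw [integral_prod_mul_log_prod _ (measurable_lamFactor j) (lamFactor_mem_Icc j)]
  simp only [integral_lamFactor_mul_log, integral_lamFactor, ite_mul, zero_mul]
  rw [sum_ite, sum_const_zero, add_zero, sum_congr rfl fun k hk => by
    rw [prod_erase_ite_le j k (mem_filter.1 hk).2], sum_const, filter_ge_eq_Iic, Fin.card_Iic,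
    nsmul_eq_mul, one_div_pow]
  push_cast
  field_simp

end LamFactor

/-- For `1 ≤ j` with `j + 1 ≤ n - 1` (1-based paper indices), the recursion
`F_{j+1} = F_j / 2 − a / 2^j` holds, where `a = ln 2 − 1/2`.  In 0-based indices, paper
`F_{j+1}` is `Fexp (n-1) ⟨j, _⟩` and paper `F_j` is `Fexp (n-1) ⟨j-1, _⟩`. -/
theorem stmt_11 (n : ℕ) (j : ℕ) (hj1 : 1 ≤ j) (hj2 : j + 1 ≤ n - 1) :
    Fexp (n - 1) ⟨j, by omega⟩ =
      Fexp (n - 1) ⟨j - 1, by omega⟩ / 2 - (Real.log 2 - 1 / 2) / 2 ^ j := by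
  obtain ⟨i, rfl⟩ : ∃ i, j = i + 1 := ⟨j - 1, by omega⟩
  rw [Fexp_eq, Fexp_eq]
  simp only [Nat.add_sub_cancel]
  push_cast
  field_simp
  ring
end
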